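/- Let q ∈ ℕ, q ≥ 2, and let r : ℝ → ℝ be a measurable function with |r|^q locally integrable. Set L(t) = ∫₀^t r(u)^q du and L_{|·|}(t) = ∫₀^t |r(u)|^q du for t > 0. Assume that L and L_{|·|} are slowly varying at infinity, that L(t) → ∞ as t → ∞, and that limsup_{t→∞} L_{|·|}(t)/L(t) < ∞. Then for every integer m with 1 ≤ m < q and every v > 0, ∫₀^{t v} |r(u)|^m du = o(t^{1 − m/q} L(t)^{m/q}) as t → ∞. -/

import Mathlib

open MeasureTheory Filter Asymptotics Set Topology

/-! By Hölder, `∫ₐᵇ |r|^m ≤ (b - a)^(1-m/q) (∫ₐᵇ |r|^q)^(m/q)`. Split `[0, vt]` at `εt`.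
The piece on `[0, εt]` is at most `ε^(1-m/q) t^(1-m/q) L_{|·|}(εt)^(m/q)`, and
`L_{|·|}(εt) ~ L_{|·|}(t)` by slow variation. On `[εt, vt]` the `q`-th power integral is
`L_{|·|}(vt) - L_{|·|}(εt) = o(L_{|·|}(t))`, again by slow variation. Letting `ε → 0` gives
`o(t^(1-m/q) L_{|·|}(t)^(m/q))`, and `L_{|·|} = O(L)` turns this into the claim. -/

section AbsPow

variable {α : Type*} [MeasurableSpace α] {μ : Measure α} {f : α → ℝ} {m q : ℕ}

theorem integral_abs_pow_le [IsFiniteMeasure μ] (hm : 0 < m) (hmq : m < q)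
    (hf : AEStronglyMeasurable f μ) (hfq : Integrable (fun x => |f x| ^ q) μ) :
    ∫ x, |f x| ^ m ∂μ ≤
      μ.real univ ^ (1 - (m : ℝ) / q) * (∫ x, |f x| ^ q ∂μ) ^ ((m : ℝ) / q) := by
  have hm0 : (0 : ℝ) < m := by exact_mod_cast hm
  have hmq' : (m : ℝ) < q := by exact_mod_cast hmq
  have hq0 : (0 : ℝ) < q := hm0.trans hmq'
  have hpq : (q / m : ℝ).HolderConjugate (q / (q - m)) :=
    ⟨by field_simp; ring, by positivity, div_pos hq0 (sub_pos.2 hmq')⟩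
  have hpow (x : α) : (|f x| ^ m) ^ (q / m : ℝ) = |f x| ^ q := by
    rw [← Real.rpow_natCast _ m, ← Real.rpow_mul (abs_nonneg _), mul_div_cancel₀ _ hm0.ne',
      Real.rpow_natCast]
  have hsm : AEStronglyMeasurable (fun x => |f x| ^ m) μ := hf.norm.pow m
  have hfm : MemLp (fun x => |f x| ^ m) (ENNReal.ofReal (q / m)) μ := by
    refine (integrable_norm_rpow_iff hsm (by simp [hq0, hm0])
      ENNReal.ofReal_ne_top).1 (hfq.congr (ae_of_all _ fun x => ?_))
    simp only [ENNReal.toReal_ofReal (by positivity : (0 : ℝ) ≤ q / m)]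
    rw [Real.norm_of_nonneg (by positivity : (0 : ℝ) ≤ |f x| ^ m), hpow]
  have H := integral_mul_le_Lp_mul_Lq_of_nonneg hpq (ae_of_all _ fun x => by positivity)
    (ae_of_all _ fun _ => zero_le_one) hfm (memLp_const 1)
  simp only [mul_one, Real.one_rpow, hpow, integral_const, smul_eq_mul, one_div, inv_div] at H
  rw [mul_comm]
  convert H using 3
  field_simp

theorem abs_pow_le_one_add_abs_pow (x : ℝ) (hmq : m ≤ q) : |x| ^ m ≤ 1 + |x| ^ q := by
  rcases le_total |x| 1 with hx | hx
  · linarith [pow_le_one₀ (abs_nonneg x) hx (n := m), pow_nonneg (abs_nonneg x) q]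
  · linarith [pow_le_pow_right₀ hx hmq]

theorem MeasureTheory.LocallyIntegrable.abs_pow_of_le [TopologicalSpace α]
    [IsLocallyFiniteMeasure μ] (hmq : m ≤ q) (hf : AEStronglyMeasurable f μ)
    (hfq : LocallyIntegrable (fun x => |f x| ^ q) μ) :
    LocallyIntegrable (fun x => |f x| ^ m) μ :=
  ((locallyIntegrable_const 1).add hfq).mono (hf.norm.pow m) <| ae_of_all _ fun x => by
    simp only [Real.norm_eq_abs, abs_pow, abs_abs, Pi.add_apply]
    exact (abs_pow_le_one_add_abs_pow (f x) hmq).trans (le_abs_self _)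

end AbsPow

theorem MeasureTheory.LocallyIntegrable.intervalIntegrable {E : Type*} [NormedAddCommGroup E]
    {f : ℝ → E} {μ : Measure ℝ} [IsLocallyFiniteMeasure μ] (hf : LocallyIntegrable f μ)
    (a b : ℝ) : IntervalIntegrable f μ a b :=
  (hf.integrableOn_isCompact isCompact_uIcc).intervalIntegrable

section IntervalIntegral

variable {f G : ℝ → ℝ} {m q : ℕ}

theorem intervalIntegral_abs_pow_nonneg (f : ℝ → ℝ) (n : ℕ) {a b : ℝ} (hab : a ≤ b) :
    0 ≤ ∫ u in a..b, |f u| ^ n :=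
  intervalIntegral.integral_nonneg hab fun _ _ => by positivity

theorem intervalIntegral_abs_pow_le {a b : ℝ} (hab : a ≤ b) (hm : 0 < m) (hmq : m < q)
    (hf : AEStronglyMeasurable f) (hfq : IntervalIntegrable (fun x => |f x| ^ q) volume a b) :
    ∫ x in a..b, |f x| ^ m ≤
      (b - a) ^ (1 - (m : ℝ) / q) * (∫ x in a..b, |f x| ^ q) ^ ((m : ℝ) / q) := by
  have : IsFiniteMeasure (volume.restrict (Ioc a b)) :=
    isFiniteMeasure_restrict.2 measure_Ioc_lt_top.ne
  simpa only [intervalIntegral.integral_of_le hab, measureReal_restrict_apply_univ,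
    Real.volume_real_Ioc_of_le hab] using integral_abs_pow_le hm hmq hf.restrict hfq.1

theorem intervalIntegral_abs_pow_le_add (hG : ∀ t, G t = ∫ u in (0 : ℝ)..t, |f u| ^ q)
    (hm : 0 < m) (hmq : m < q) (hf : AEStronglyMeasurable f)
    (hfq : LocallyIntegrable (fun x => |f x| ^ q)) {a b : ℝ} (ha : 0 ≤ a) (hab : a ≤ b) :
    ∫ u in (0 : ℝ)..b, |f u| ^ m ≤ a ^ (1 - (m : ℝ) / q) * G a ^ ((m : ℝ) / q) +
      (b - a) ^ (1 - (m : ℝ) / q) * (G b - G a) ^ ((m : ℝ) / q) := by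
  have hIm := (hfq.abs_pow_of_le hmq.le hf).intervalIntegrable
  have hIq := hfq.intervalIntegrable
  rw [← intervalIntegral.integral_add_adjacent_intervals (hIm 0 a) (hIm a b), hG, hG,
    intervalIntegral.integral_interval_sub_left (hIq 0 b) (hIq 0 a)]
  gcongr
  · simpa using intervalIntegral_abs_pow_le ha hm hmq hf (hIq 0 a)
  · exact intervalIntegral_abs_pow_le hab hm hmq hf (hIq a b)

theorem eventually_intervalIntegral_abs_pow_le (hG : ∀ t, G t = ∫ u in (0 : ℝ)..t, |f u| ^ q)
    (hm : 0 < m) (hmq : m < q) (hf : AEStronglyMeasurable f)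
    (hfq : LocallyIntegrable (fun x => |f x| ^ q)) (hGpos : ∀ᶠ t in atTop, 0 < G t)
    {ε v : ℝ} (hε : 0 < ε) (hεv : ε ≤ v) :
    ∀ᶠ t in atTop, ∫ u in (0 : ℝ)..t * v, |f u| ^ m ≤
      (ε ^ (1 - (m : ℝ) / q) * (G (ε * t) / G t) ^ ((m : ℝ) / q) +
        (v - ε) ^ (1 - (m : ℝ) / q) * ((G (v * t) - G (ε * t)) / G t) ^ ((m : ℝ) / q)) *
      (t ^ (1 - (m : ℝ) / q) * G t ^ ((m : ℝ) / q)) := by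
  filter_upwards [hGpos, eventually_gt_atTop 0] with t hGt ht
  have hscale (s X : ℝ) (hs : 0 ≤ s) (hX : 0 ≤ X) :
      (s * t) ^ (1 - (m : ℝ) / q) * X ^ ((m : ℝ) / q) =
        s ^ (1 - (m : ℝ) / q) * (X / G t) ^ ((m : ℝ) / q) *
          (t ^ (1 - (m : ℝ) / q) * G t ^ ((m : ℝ) / q)) := by
    have : G t ^ ((m : ℝ) / q) ≠ 0 := by positivity
    rw [Real.mul_rpow hs ht.le, Real.div_rpow hX hGt.le]
    field_simp
  have hGmono : G (ε * t) ≤ G (v * t) := by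
    rw [hG, hG]
    exact intervalIntegral.integral_mono_interval le_rfl (by positivity) (by gcongr)
      (ae_of_all _ fun u => by positivity) (hfq.intervalIntegrable 0 (v * t))
  calc ∫ u in (0 : ℝ)..t * v, |f u| ^ m
      ≤ (ε * t) ^ (1 - (m : ℝ) / q) * G (ε * t) ^ ((m : ℝ) / q) +
          (v * t - ε * t) ^ (1 - (m : ℝ) / q) * (G (v * t) - G (ε * t)) ^ ((m : ℝ) / q) := by
        rw [mul_comm t v]
        exact intervalIntegral_abs_pow_le_add hG hm hmq hf hfq (by positivity) (by gcongr)
    _ = _ := by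
        rw [← sub_mul, hscale ε _ hε.le
          (hG (ε * t) ▸ intervalIntegral_abs_pow_nonneg f q (by positivity)),
          hscale (v - ε) _ (sub_nonneg.2 hεv) (sub_nonneg.2 hGmono)]
        ring

theorem isLittleO_intervalIntegral_abs_pow (hG : ∀ t, G t = ∫ u in (0 : ℝ)..t, |f u| ^ q)
    (hm : 0 < m) (hmq : m < q) (hf : AEStronglyMeasurable f)
    (hfq : LocallyIntegrable (fun x => |f x| ^ q))
    (hslow : ∀ c > 0, Tendsto (fun t => G (c * t) / G t) atTop (𝓝 1)) {v : ℝ} (hv : 0 < v) :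
    (fun t => ∫ u in (0 : ℝ)..t * v, |f u| ^ m) =o[atTop]
      fun t => t ^ (1 - (m : ℝ) / q) * G t ^ ((m : ℝ) / q) := by
  have hq : (0 : ℝ) < q := by exact_mod_cast hm.trans hmq
  have hβ : 0 < (m : ℝ) / q := div_pos (by exact_mod_cast hm) hq
  have hα : 0 < 1 - (m : ℝ) / q := by
    rw [sub_pos, div_lt_one hq]
    exact_mod_cast hmq
  -- `G t / G t → 1` forces `G t ≠ 0` eventually, since `0 / 0 = 0`.
  have hGpos : ∀ᶠ t in atTop, 0 < G t := by
    filter_upwards [(hslow 1 one_pos).eventually_ne one_ne_zero, eventually_ge_atTop 0]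
      with t hne ht
    refine (hG t ▸ intervalIntegral_abs_pow_nonneg f q ht).lt_of_ne' ?_
    rintro h
    simp [h] at hne
  have hcoef {ε : ℝ} (hε : 0 < ε) : Tendsto (fun t =>
      ε ^ (1 - (m : ℝ) / q) * (G (ε * t) / G t) ^ ((m : ℝ) / q) +
        (v - ε) ^ (1 - (m : ℝ) / q) * ((G (v * t) - G (ε * t)) / G t) ^ ((m : ℝ) / q))
      atTop (𝓝 (ε ^ (1 - (m : ℝ) / q))) := by
    have h1 := (hslow ε hε).rpow_const (p := (m : ℝ) / q) (Or.inr hβ.le)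
    have h2 := ((hslow v hv).sub (hslow ε hε)).rpow_const (p := (m : ℝ) / q) (Or.inr hβ.le)
    convert (h1.const_mul (ε ^ (1 - (m : ℝ) / q))).add
      (h2.const_mul ((v - ε) ^ (1 - (m : ℝ) / q))) using 2
    · simp [sub_div]
    · simp [Real.zero_rpow hβ.ne']
  have hsmall : Tendsto (fun ε : ℝ => ε ^ (1 - (m : ℝ) / q)) (𝓝[>] 0) (𝓝 0) := by
    simpa [Real.zero_rpow hα.ne'] using
      (Real.continuousAt_rpow_const 0 _ (Or.inr hα.le)).tendsto.mono_left nhdsWithin_le_nhds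
  rw [isLittleO_iff]
  intro δ hδ
  obtain ⟨ε, hεδ, hε, hεv⟩ :=
    ((hsmall.eventually (gt_mem_nhds hδ)).and (Ioc_mem_nhdsGT hv)).exists
  filter_upwards [eventually_intervalIntegral_abs_pow_le hG hm hmq hf hfq hGpos hε hεv,
    (hcoef hε).eventually (gt_mem_nhds hεδ), hGpos, eventually_gt_atTop 0]
    with t hbound hc hGt ht
  rw [Real.norm_of_nonneg (intervalIntegral_abs_pow_nonneg f m (by positivity)),
    Real.norm_of_nonneg (by positivity)]
  exact hbound.trans (mul_le_mul_of_nonneg_right hc.le (by positivity))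

end IntervalIntegral

theorem stmt9_general (q : ℕ) (r : ℝ → ℝ) (hmeas : Measurable r)
    (hloc : LocallyIntegrable (fun u => |r u| ^ q) volume)
    (L Labs : ℝ → ℝ)
    (hLabs : ∀ t, Labs t = ∫ u in (0:ℝ)..t, |r u| ^ q)
    (hslowLabs : ∀ c > 0, Tendsto (fun t => Labs (c * t) / Labs t) atTop (nhds 1))
    (hinf : Tendsto L atTop atTop)
    (hbdd : IsBoundedUnder (· ≤ ·) atTop (fun t => Labs t / L t))
    (m : ℕ) (hm : 1 ≤ m) (hmq : m < q) (v : ℝ) (hv : 0 < v) :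
    (fun t => ∫ u in (0:ℝ)..(t * v), |r u| ^ m) =o[atTop]
      (fun t => t ^ (1 - (m : ℝ) / q) * L t ^ ((m : ℝ) / q)) := by
  have hLpos : ∀ᶠ t in atTop, 0 < L t := hinf.eventually_gt_atTop 0
  obtain ⟨C, hC⟩ := hbdd
  have hLabsL : Labs =O[atTop] L := by
    refine IsBigO.of_bound C ?_
    filter_upwards [eventually_map.1 hC, hLpos, eventually_ge_atTop 0] with t hCt hLt ht
    rw [Real.norm_of_nonneg (hLabs t ▸ intervalIntegral_abs_pow_nonneg r q ht),
      Real.norm_of_nonneg hLt.le]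
    exact (div_le_iff₀ hLt).1 hCt
  refine (isLittleO_intervalIntegral_abs_pow hLabs hm hmq hmeas.aestronglyMeasurable hloc
    hslowLabs hv).trans_isBigO ((isBigO_refl _ _).mul (hLabsL.rpow ?_ ?_))
  · positivity
  · filter_upwards [hLpos] with t ht using ht.le

/-- Let `q ≥ 2`, let `r` be measurable with `|r|^q` locally integrable, and set
`L t = ∫₀^t r(u)^q du`, `L|·| t = ∫₀^t |r u|^q du`. Assume `L` and `L|·|` are slowly varying at
infinity, `L t → ∞`, and `limsup_{t→∞} L|·| t / L t < ∞`. Then, for every integer `1 ≤ m < q`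
and every `v > 0`, `∫₀^{tv} |r u|^m du = o(t^{1−m/q} L(t)^{m/q})` as `t → ∞`. -/
theorem stmt9 (q : ℕ) (hq : 2 ≤ q) (r : ℝ → ℝ) (hmeas : Measurable r)
    (hloc : LocallyIntegrable (fun u => |r u| ^ q) volume)
    (L Labs : ℝ → ℝ)
    (hL : ∀ t, L t = ∫ u in (0:ℝ)..t, r u ^ q)
    (hLabs : ∀ t, Labs t = ∫ u in (0:ℝ)..t, |r u| ^ q)
    (hslowL : ∀ c > 0, Tendsto (fun t => L (c * t) / L t) atTop (nhds 1))
    (hslowLabs : ∀ c > 0, Tendsto (fun t => Labs (c * t) / Labs t) atTop (nhds 1))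
    (hinf : Tendsto L atTop atTop)
    (hbdd : IsBoundedUnder (· ≤ ·) atTop (fun t => Labs t / L t))
    (m : ℕ) (hm : 1 ≤ m) (hmq : m < q) (v : ℝ) (hv : 0 < v) :
    (fun t => ∫ u in (0:ℝ)..(t * v), |r u| ^ m) =o[atTop]
      (fun t => t ^ (1 - (m : ℝ) / q) * L t ^ ((m : ℝ) / q)) :=
  stmt9_general q r hmeas hloc L Labs hLabs hslowLabs hinf hbdd m hm hmq v hv
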